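/- arXiv:1809.10034 — 2 statements merged into one kernel-verified Lean document; each statement's English description precedes it below -/
import Mathlib

section
/- Let k, l ≥ 1 and P(x,y) = x^{2k}(x−1)^{2l} + y². Suppose f₁, h₁, f₂, h₂ are real polynomials in two variables with f₁ coprime to h₁ and f₂ coprime to h₂, the rational functions f₁/h₁ and f₂/h₂ are defined on ℝ²∖{(0,0)} and ℝ²∖{(1,0)} respectively (i.e., h₁ has no zeros outside (0,0) and h₂ none outside (1,0)), and P·f₁·h₂ = f₂·h₁ as polynomials. Then there exists a nonzero real number λ with f₂ = λ·P·f₁ and h₁ = λ^{-1}·h₂. -/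
/-!
`P` is irreducible: as a monic quadratic `y² + c(x)` over `ℝ[x]` with `c` monic, a factorization
would give a root `b(x)` with `b² = -c`, impossible by comparing leading coefficients. As `P`
vanishes at `(1,0)` and `h₁` does not, `P ∤ h₁`, so `h₁` is coprime to `P·f₁`. Then
`P·f₁·h₂ = f₂·h₁` forces `h₁ ∣ h₂` and `h₂ ∣ h₁`; the two differ by a unit, i.e. a nonzero
constant, and cancelling `h₂` gives `f₂ = λ·P·f₁`.
-/

open MvPolynomial

namespace Polynomial

variable {R : Type*} [CommRing R] [LinearOrder R] [IsStrictOrderedRing R]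

theorem sq_ne_neg_of_monic {c : R[X]} (hc : c.Monic) (b : R[X]) : b ^ 2 ≠ -c := by
  intro h
  have hlc := congrArg leadingCoeff h
  rw [leadingCoeff_pow, leadingCoeff_neg, hc.leadingCoeff] at hlc
  nlinarith [sq_nonneg b.leadingCoeff]

theorem irreducible_X_sq_add_C_of_monic {c : R[X]} (hc : c.Monic) :
    Irreducible (X ^ 2 + C c : R[X][X]) := by
  have hmonic : (X ^ 2 + C c : R[X][X]).Monic := monic_X_pow_add_C c two_ne_zero
  rw [hmonic.irreducible_iff_roots_eq_zero_of_degree_le_three (by rw [natDegree_X_pow_add_C])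
    (by rw [natDegree_X_pow_add_C]; norm_num)]
  refine Multiset.eq_zero_of_forall_notMem fun b hb => sq_ne_neg_of_monic hc b ?_
  have := (mem_roots hmonic.ne_zero).mp hb
  simp only [IsRoot, eval_add, eval_pow, eval_X, eval_C] at this
  exact eq_neg_of_add_eq_zero_left this

end Polynomial

namespace MvPolynomial

variable (R : Type*) [CommRing R]

noncomputable def bivariateEquiv : MvPolynomial (Fin 2) R ≃ₐ[R] Polynomial (Polynomial R) :=
  (renameEquiv R (Equiv.swap 0 1)).trans
    ((finSuccEquiv R 1).trans (Polynomial.mapAlgEquiv (uniqueAlgEquiv R (Fin 1))))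

@[simp]
theorem bivariateEquiv_X_zero : bivariateEquiv R (X 0) = Polynomial.C Polynomial.X := by
  have h := finSuccEquiv_X_succ (R := R) (n := 1) (j := 0)
  simp only [Fin.succ_zero_eq_one] at h
  simp [bivariateEquiv, h]

@[simp]
theorem bivariateEquiv_X_one : bivariateEquiv R (X 1) = Polynomial.X := by
  simp [bivariateEquiv, finSuccEquiv_X_zero]

theorem irreducible_X0_pow_mul_X0_sub_one_pow_add_X1_sq [LinearOrder R] [IsStrictOrderedRing R]
    (m n : ℕ) :
    Irreducible ((X 0) ^ m * (X 0 - 1) ^ n + (X 1) ^ 2 : MvPolynomial (Fin 2) R) := by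
  have hmonic : (Polynomial.X ^ m * (Polynomial.X - 1) ^ n : Polynomial R).Monic := by
    simpa using (Polynomial.monic_X_pow m).mul ((Polynomial.monic_X_sub_C (1 : R)).pow n)
  rw [← MulEquiv.irreducible_iff (bivariateEquiv R)]
  convert Polynomial.irreducible_X_sq_add_C_of_monic hmonic using 1
  simp only [map_add, map_mul, map_pow, map_sub, map_one, bivariateEquiv_X_zero,
    bivariateEquiv_X_one]
  ring

end MvPolynomial

theorem associated_of_irreducible_mul_mul_eq {α : Type*} [CommMonoidWithZero α]
    [IsCancelMulZero α] [DecompositionMonoid α] {p f₁ h₁ f₂ h₂ : α}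
    (hp : Irreducible p) (hph₁ : ¬ p ∣ h₁)
    (hfh₁ : IsRelPrime f₁ h₁) (hfh₂ : IsRelPrime f₂ h₂) (heq : p * f₁ * h₂ = f₂ * h₁) :
    Associated h₂ h₁ := by
  have hh₁pf₁ : IsRelPrime h₁ (p * f₁) :=
    ((hp.isRelPrime_iff_not_dvd.mpr hph₁).symm).mul_right hfh₁.symm
  refine associated_of_dvd_dvd ?_ ?_
  · exact hfh₂.symm.dvd_of_dvd_mul_left (heq ▸ dvd_mul_left h₂ (p * f₁))
  · exact hh₁pf₁.dvd_of_dvd_mul_left (heq.symm ▸ dvd_mul_left h₁ f₂)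

theorem cousin_section_relation_general (k l : ℕ) (hl : 1 ≤ l)
    (P f₁ h₁ f₂ h₂ : MvPolynomial (Fin 2) ℝ)
    (hP : P = (X 0) ^ (2 * k) * (X 0 - 1) ^ (2 * l) + (X 1) ^ 2)
    -- `f₁` and `h₁` coprime: no common non-unit factor
    (hcop₁ : ∀ d : MvPolynomial (Fin 2) ℝ, d ∣ f₁ → d ∣ h₁ → IsUnit d)
    (hcop₂ : ∀ d : MvPolynomial (Fin 2) ℝ, d ∣ f₂ → d ∣ h₂ → IsUnit d)
    -- `h₁` has no zeros outside `(0,0)`, `h₂` none outside `(1,0)`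
    (hz₁ : ∀ v : Fin 2 → ℝ, eval v h₁ = 0 → v = ![0, 0])
    (heq : P * f₁ * h₂ = f₂ * h₁) :
    ∃ lam : ℝ, lam ≠ 0 ∧ f₂ = C lam * P * f₁ ∧ h₁ = C lam⁻¹ * h₂ := by
  have hPirr : Irreducible P := hP ▸ irreducible_X0_pow_mul_X0_sub_one_pow_add_X1_sq ℝ _ _
  have hPh₁ : ¬ P ∣ h₁ := by
    rintro ⟨t, rfl⟩
    have hP₁₀ : eval ![1, 0] P = 0 := by simp [hP, zero_pow (show 2 * l ≠ 0 by omega)]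
    simpa using congrFun (hz₁ ![1, 0] (by rw [eval_mul, hP₁₀, zero_mul])) 0
  obtain ⟨u, hu⟩ := associated_of_irreducible_mul_mul_eq hPirr hPh₁ (fun d => hcop₁ d)
    (fun d => hcop₂ d) heq
  obtain ⟨s, hs, hus⟩ := isUnit_iff_eq_C_of_isReduced.mp u.isUnit
  have hh₂ : h₂ ≠ 0 := by
    rintro rfl
    exact hPh₁ (by simp [← hu])
  have hPf₁ : P * f₁ = C s * f₂ := mul_right_cancel₀ hh₂ (by rw [heq, ← hu, hus]; ring)
  refine ⟨s⁻¹, inv_ne_zero hs.ne_zero, ?_, by rw [← hu, hus, inv_inv, mul_comm]⟩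
  rw [mul_assoc, hPf₁, ← mul_assoc, ← C_mul, inv_mul_cancel₀ hs.ne_zero, C_1, one_mul]

/-- If `f₁/h₁` and `f₂/h₂` are reduced fractions of polynomials, regular off
`(0,0)` and `(1,0)` respectively, and `P·f₁·h₂ = f₂·h₁` where
`P = x^{2k}(x−1)^{2l} + y²`, then `f₂ = λ·P·f₁` and `h₁ = λ⁻¹·h₂` for some
nonzero real `λ`. -/
theorem cousin_section_relation (k l : ℕ) (hk : 1 ≤ k) (hl : 1 ≤ l)
    (P f₁ h₁ f₂ h₂ : MvPolynomial (Fin 2) ℝ)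
    (hP : P = (X 0) ^ (2 * k) * (X 0 - 1) ^ (2 * l) + (X 1) ^ 2)
    -- `f₁` and `h₁` coprime: no common non-unit factor
    (hcop₁ : ∀ d : MvPolynomial (Fin 2) ℝ, d ∣ f₁ → d ∣ h₁ → IsUnit d)
    (hcop₂ : ∀ d : MvPolynomial (Fin 2) ℝ, d ∣ f₂ → d ∣ h₂ → IsUnit d)
    -- `h₁` has no zeros outside `(0,0)`, `h₂` none outside `(1,0)`
    (hz₁ : ∀ v : Fin 2 → ℝ, eval v h₁ = 0 → v = ![0, 0])
    (hz₂ : ∀ v : Fin 2 → ℝ, eval v h₂ = 0 → v = ![1, 0])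
    (heq : P * f₁ * h₂ = f₂ * h₁) :
    ∃ lam : ℝ, lam ≠ 0 ∧ f₂ = C lam * P * f₁ ∧ h₁ = C lam⁻¹ * h₂ :=
  cousin_section_relation_general k l hl P f₁ h₁ f₂ h₂ hP hcop₁ hcop₂ hz₁ heq
end

section
/- For k, l ≥ 1, the polynomial P_{k,l}(x,y) = x^{2k}(x−1)^{2l} + y² is irreducible in ℝ[x,y]. -/
open MvPolynomial

/-!
Viewed as a polynomial in `y` over the domain `ℝ[x]`, `P` is the monic quadratic `y² + c` with
`c = x^{2k}(x−1)^{2l}`. A monic quadratic over a domain is irreducible as soon as it has no root,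
and a root `r` would give `r(2)² = −c(2) = −4^k < 0`.
-/

namespace Polynomial

theorem irreducible_X_sq_add_C {R : Type*} [CommRing R] [IsDomain R] {c : R}
    (h : ∀ r : R, r ^ 2 ≠ -c) : Irreducible (X ^ 2 + C c : R[X]) := by
  have hmonic := monic_X_pow_add_C c two_ne_zero
  have hdeg : (X ^ 2 + C c : R[X]).natDegree = 2 := natDegree_X_pow_add_C
  rw [hmonic.irreducible_iff_roots_eq_zero_of_degree_le_three hdeg.ge (by omega)]
  refine Multiset.eq_zero_of_forall_notMem fun r hr => h r ?_
  rw [mem_roots hmonic.ne_zero, IsRoot.def] at hr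
  simp only [eval_add, eval_pow, eval_X, eval_C] at hr
  exact eq_neg_of_add_eq_zero_left hr

end Polynomial

namespace MvPolynomial

theorem sq_ne_neg_of_eval_pos {σ R : Type*} [CommRing R] [LinearOrder R] [IsStrictOrderedRing R]
    {c : MvPolynomial σ R} {x : σ → R} (hc : 0 < eval x c) (r : MvPolynomial σ R) :
    r ^ 2 ≠ -c := by
  intro hr
  have := congrArg (eval x) hr
  rw [map_pow, map_neg] at this
  nlinarith [sq_nonneg (eval x r)]

section FinTwo

variable {R : Type*} [CommRing R]

variable (R) in
noncomputable def finTwoEquivPolynomialY :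
    MvPolynomial (Fin 2) R ≃ₐ[R] Polynomial (MvPolynomial (Fin 1) R) :=
  (renameEquiv R (Equiv.swap 0 1)).trans (finSuccEquiv R 1)

theorem finTwoEquivPolynomialY_X_zero :
    finTwoEquivPolynomialY R (X 0) = Polynomial.C (X 0) := by
  simp only [finTwoEquivPolynomialY, AlgEquiv.trans_apply, renameEquiv_apply, rename_X,
    Equiv.swap_apply_left]
  exact finSuccEquiv_X_succ (j := 0)

theorem finTwoEquivPolynomialY_X_one :
    finTwoEquivPolynomialY R (X 1) = Polynomial.X := by
  simp only [finTwoEquivPolynomialY, AlgEquiv.trans_apply, renameEquiv_apply, rename_X,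
    Equiv.swap_apply_right, finSuccEquiv_X_zero]

end FinTwo

end MvPolynomial

theorem Pkl_irreducible_general (k l : ℕ) :
    Irreducible
      ((X 0) ^ (2 * k) * (X 0 - 1) ^ (2 * l) + (X 1) ^ 2 :
        MvPolynomial (Fin 2) ℝ) := by
  set c : MvPolynomial (Fin 1) ℝ := X 0 ^ (2 * k) * (X 0 - 1) ^ (2 * l)
  have hP : finTwoEquivPolynomialY ℝ ((X 0) ^ (2 * k) * (X 0 - 1) ^ (2 * l) + (X 1) ^ 2)
      = Polynomial.X ^ 2 + Polynomial.C c := by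
    simp only [c, map_add, map_mul, map_pow, map_sub, map_one, finTwoEquivPolynomialY_X_zero,
      finTwoEquivPolynomialY_X_one]
    ring
  have hc : 0 < eval (fun _ => 2) c := by
    simp only [c, map_mul, map_pow, map_sub, map_one, eval_X]
    norm_num
  rw [← MulEquiv.irreducible_iff (finTwoEquivPolynomialY ℝ), hP]
  exact Polynomial.irreducible_X_sq_add_C (sq_ne_neg_of_eval_pos hc)

/-- For `k, l ≥ 1`, the polynomial `x^{2k}(x−1)^{2l} + y²` is irreducible in `ℝ[x,y]`. -/
theorem Pkl_irreducible (k l : ℕ) (hk : 1 ≤ k) (hl : 1 ≤ l) :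
    Irreducible
      ((X 0) ^ (2 * k) * (X 0 - 1) ^ (2 * l) + (X 1) ^ 2 :
        MvPolynomial (Fin 2) ℝ) :=
  Pkl_irreducible_general k l
end
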